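/- For 1 < k < n, the partition Σ' = {Ω^1,...,Ω^k} where Ω^j = {Δ_{1j},...,Δ_{nj}}, is a system of blocks for the action of Aut(A(n,k,k)) on the family Ω of all sets Δ_{ij}: for every automorphism g and every j, either (Ω^j)^g = Ω^j or (Ω^j)^g ∩ Ω^j = ∅. -/

import Mathlib

def A (n k r : ℕ) : SimpleGraph (Fin k ↪ Fin n) where
  Adj s t := s ≠ t ∧ (Finset.univ.filter fun i => s i ≠ t i).card = r
  symm := by
    constructor
    rintro s t ⟨hst, hc⟩
    refine ⟨hst.symm, ?_⟩
    have h : (Finset.univ.filter fun i => t i ≠ s i)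
        = (Finset.univ.filter fun i => s i ≠ t i) := by
      ext i
      simp only [Finset.mem_filter, Finset.mem_univ, true_and]
      exact ne_comm
    rw [h]; exact hc
  loopless := by constructor; rintro s ⟨h, _⟩; exact h rfl

def Delta (n k : ℕ) (i : Fin n) (j : Fin k) : Set (Fin k ↪ Fin n) :=
  {s | s j = i ∧ ∀ t, t ≠ j → s t ≠ i}

section Basics

variable {n k : ℕ}

/-- For embeddings, the second condition in `Delta` is automatic. -/
lemma delta_eq (i : Fin n) (j : Fin k) : Delta n k i j = {s | s j = i} := by
  ext s
  constructor
  · rintro ⟨h, _⟩; exact h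
  · intro h
    exact ⟨h, fun t ht hc => ht (s.injective (hc.trans h.symm))⟩

lemma adj_iff (hk : 0 < k) (s t : Fin k ↪ Fin n) :
    (A n k k).Adj s t ↔ ∀ p, s p ≠ t p := by
  constructor
  · rintro ⟨-, hc⟩ p
    have : (Finset.univ.filter fun i => s i ≠ t i) = Finset.univ := by
      apply Finset.eq_univ_of_card
      simpa using hc
    have := Finset.eq_univ_iff_forall.1 this p
    simpa using this
  · intro h
    refine ⟨fun he => h ⟨0, hk⟩ (by rw [he]), ?_⟩
    rw [Finset.filter_true_of_mem fun i _ => h i]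
    simp

/-- fresh values exist -/
lemma exists_fresh (hkn : k < n) (s : Fin k ↪ Fin n) : ∃ x, ∀ p, s p ≠ x := by
  by_contra h
  push_neg at h
  have hsurj : Function.Surjective s := fun x => h x
  have := Fintype.card_le_of_surjective s hsurj
  simp at this
  omega

/-- embedding with two prescribed values -/
lemma exists_two (hkn : k ≤ n) {i i' : Fin n} {j j' : Fin k} (hj : j ≠ j') (hi : i ≠ i') :
    ∃ s : Fin k ↪ Fin n, s j = i ∧ s j' = i' := by
  set e : Fin k ↪ Fin n := Fin.castLEEmb hkn with he
  set e1 : Fin k ↪ Fin n := e.trans (Equiv.swap (e j) i).toEmbedding with he1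
  have h1j : e1 j = i := by simp [he1]
  have h1j' : e1 j' ≠ i := fun hc => hj (e1.injective (hc.trans h1j.symm)).symm
  refine ⟨e1.trans (Equiv.swap (e1 j') i').toEmbedding, ?_, ?_⟩
  · simp only [Function.Embedding.trans_apply, Equiv.coe_toEmbedding]
    rw [h1j, Equiv.swap_apply_of_ne_of_ne (Ne.symm h1j') hi]
  · simp

end Basics

section Moves

variable {n k : ℕ}

def move (s : Fin k ↪ Fin n) (m : Fin k) (x : Fin n) (hx : ∀ p, s p ≠ x) : Fin k ↪ Fin n :=
  ⟨fun p => if p = m then x else s p, by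
    intro p q h
    simp only at h
    by_cases hp : p = m <;> by_cases hq : q = m
    · rw [hp, hq]
    · rw [if_pos hp, if_neg hq] at h; exact absurd h.symm (hx q)
    · rw [if_neg hp, if_pos hq] at h; exact absurd h (hx p)
    · rw [if_neg hp, if_neg hq] at h; exact s.injective h⟩

lemma move_apply_self (s : Fin k ↪ Fin n) (m : Fin k) (x : Fin n) (hx : ∀ p, s p ≠ x) :
    move s m x hx m = x := by exact if_pos rfl

lemma move_apply_ne (s : Fin k ↪ Fin n) (m : Fin k) (x : Fin n) (hx : ∀ p, s p ≠ x)
    {p : Fin k} (hp : p ≠ m) : move s m x hx p = s p := by exact if_neg hp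

def Step (s t : Fin k ↪ Fin n) : Prop :=
  ∃ m x, ∃ hx : ∀ p, s p ≠ x, t = move s m x hx

lemma step_symm {s t : Fin k ↪ Fin n} (h : Step s t) : Step t s := by
  obtain ⟨m, x, hx, rfl⟩ := h
  have hfresh : ∀ p, move s m x hx p ≠ s m := by
    intro p
    by_cases hp : p = m
    · rw [hp, move_apply_self]; exact fun h => hx m h.symm
    · rw [move_apply_ne s m x hx hp]; exact fun h => hp (s.injective h)
  refine ⟨m, s m, hfresh, ?_⟩
  apply DFunLike.ext
  intro p
  by_cases hp : p = m
  · rw [hp, move_apply_self]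
  · rw [move_apply_ne _ m (s m) hfresh hp, move_apply_ne s m x hx hp]

lemma reach (hkn : k < n) (t : Fin k ↪ Fin n) : ∀ (d : ℕ) (s : Fin k ↪ Fin n),
    (Finset.univ.filter fun p => s p ≠ t p).card ≤ d → Relation.ReflTransGen Step s t := by
  intro d
  induction d with
  | zero =>
    intro s hs
    have : s = t := by
      apply DFunLike.ext
      intro p
      by_contra hp
      have : p ∈ Finset.univ.filter fun p => s p ≠ t p := by simp [hp]
      have := Finset.card_pos.mpr ⟨p, this⟩
      omega
    rw [this]
  | succ d ih =>
    intro s hs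
    by_cases hst : s = t
    · rw [hst]
    · have : ∃ m, s m ≠ t m := by
        by_contra hc
        push_neg at hc
        exact hst (DFunLike.ext _ _ hc)
      obtain ⟨m, hm⟩ := this
      have hmem : m ∈ Finset.univ.filter fun p => s p ≠ t p := by simp [hm]
      by_cases hA : ∀ p, s p ≠ t m
      · refine Relation.ReflTransGen.head ⟨m, t m, hA, rfl⟩ (ih _ ?_)
        have hsub : (Finset.univ.filter fun p => move s m (t m) hA p ≠ t p)
            ⊆ (Finset.univ.filter fun p => s p ≠ t p).erase m := by
          intro p hp
          simp only [Finset.mem_filter, Finset.mem_univ, true_and] at hp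
          rcases eq_or_ne p m with rfl | hpm
          · rw [move_apply_self] at hp; exact absurd rfl hp
          · rw [move_apply_ne s m (t m) hA hpm] at hp
            exact Finset.mem_erase.mpr ⟨hpm, by simp [hp]⟩
        have hle := Finset.card_le_card hsub
        rw [Finset.card_erase_of_mem hmem] at hle
        omega
      · push_neg at hA
        obtain ⟨p₀, hp₀⟩ := hA
        have hp₀m : p₀ ≠ m := fun h => hm (h ▸ hp₀)
        obtain ⟨z, hz⟩ := exists_fresh hkn s
        have hfresh1 : ∀ p, move s p₀ z hz p ≠ t m := by
          intro p
          rcases eq_or_ne p p₀ with rfl | hpp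
          · rw [move_apply_self]; exact fun h => hz p (hp₀.trans h.symm)
          · rw [move_apply_ne s p₀ z hz hpp]
            exact fun h => hpp (s.injective (h.trans hp₀.symm))
        refine Relation.ReflTransGen.head ⟨p₀, z, hz, rfl⟩
          (Relation.ReflTransGen.head ⟨m, t m, hfresh1, rfl⟩ (ih _ ?_))
        have hdis : s p₀ ≠ t p₀ := by
          intro h
          exact hp₀m (t.injective (h.symm.trans hp₀))
        have hsub : (Finset.univ.filter fun p =>
              move (move s p₀ z hz) m (t m) hfresh1 p ≠ t p)
            ⊆ (Finset.univ.filter fun p => s p ≠ t p).erase m := by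
          intro p hp
          simp only [Finset.mem_filter, Finset.mem_univ, true_and] at hp
          rcases eq_or_ne p m with rfl | hpm
          · rw [move_apply_self] at hp; exact absurd rfl hp
          · rw [move_apply_ne _ m (t m) hfresh1 hpm] at hp
            rcases eq_or_ne p p₀ with rfl | hpp
            · exact Finset.mem_erase.mpr ⟨hpm, by simp [hdis]⟩
            · rw [move_apply_ne s p₀ z hz hpp] at hp
              exact Finset.mem_erase.mpr ⟨hpm, by simp [hp]⟩
        have hle := Finset.card_le_card hsub
        rw [Finset.card_erase_of_mem hmem] at hle
        omega

lemma reach' (hkn : k < n) (s t : Fin k ↪ Fin n) : Relation.ReflTransGen Step s t :=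
  reach hkn t _ s le_rfl

end Moves

open Fin.CommRing

section Core

variable {n k : ℕ} [NeZero n]

def shifted (s : Fin k ↪ Fin n) (c : Fin n) : Fin k ↪ Fin n :=
  ⟨fun p => s p + c, fun p q h => s.injective (by simpa using h)⟩

@[simp] lemma shifted_apply (s : Fin k ↪ Fin n) (c : Fin n) (p : Fin k) :
    shifted s c p = s p + c := rfl

variable (c : (Fin k ↪ Fin n) → Fin n)

def T (s : Fin k ↪ Fin n) (m : Fin k) : Prop :=
  ∃ x, ∃ hx : ∀ p, s p ≠ x, c (move s m x hx) = c s + (s m - x)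

variable (hpair : ∀ s t : Fin k ↪ Fin n, ∃ p, s p + c s = t p + c t)
include hpair

lemma L1 (s : Fin k ↪ Fin n) (m : Fin k) (x : Fin n) (hx : ∀ p, s p ≠ x) :
    c (move s m x hx) = c s ∨ c (move s m x hx) = c s + (s m - x) := by
  obtain ⟨p, hp⟩ := hpair s (move s m x hx)
  by_cases hpm : p = m
  · subst hpm
    rw [move_apply_self] at hp
    right; linear_combination -hp
  · rw [move_apply_ne s m x hx hpm] at hp
    left; linear_combination -hp

lemma L2 (s : Fin k ↪ Fin n) (m : Fin k) (x y : Fin n) (hx : ∀ p, s p ≠ x)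
    (hy : ∀ p, s p ≠ y) (hAct : c (move s m x hx) = c s + (s m - x)) :
    c (move s m y hy) = c s + (s m - y) := by
  by_cases hxy : x = y
  · subst hxy; exact hAct
  · obtain ⟨p, hp⟩ := hpair (move s m x hx) (move s m y hy)
    by_cases hpm : p = m
    · subst hpm
      rw [move_apply_self, move_apply_self, hAct] at hp
      linear_combination -hp
    · rw [move_apply_ne s m x hx hpm, move_apply_ne s m y hy hpm, hAct] at hp
      rcases L1 c hpair s m y hy with h | h
      · rw [h] at hp
        exact absurd (by linear_combination hp) (hx m)
      · rw [h] at hp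
        exact absurd (by linear_combination -hp) hxy

lemma L3 (hkn : k < n) (s : Fin k ↪ Fin n) (m m' : Fin k)
    (hm : T c s m) (hm' : T c s m') : m = m' := by
  by_contra hne
  obtain ⟨x, hx⟩ := exists_fresh hkn s
  obtain ⟨x1, hx1, hAct1⟩ := hm
  obtain ⟨x2, hx2, hAct2⟩ := hm'
  have hA : c (move s m x hx) = c s + (s m - x) := L2 c hpair s m x1 x hx1 hx hAct1
  have hB : c (move s m' x hx) = c s + (s m' - x) := L2 c hpair s m' x2 x hx2 hx hAct2
  obtain ⟨p, hp⟩ := hpair (move s m x hx) (move s m' x hx)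
  by_cases hpm : p = m
  · subst hpm
    rw [move_apply_self, move_apply_ne s m' x hx hne, hA, hB] at hp
    exact hx m' (by linear_combination -hp)
  · by_cases hpm' : p = m'
    · subst hpm'
      rw [move_apply_self, move_apply_ne s m x hx (Ne.symm hne), hA, hB] at hp
      exact hx m (by linear_combination hp)
    · rw [move_apply_ne s m x hx hpm, move_apply_ne s m' x hx hpm', hA, hB] at hp
      exact hne (s.injective (by linear_combination hp))

lemma L4 (s : Fin k ↪ Fin n) (m : Fin k) (x : Fin n) (hx : ∀ p, s p ≠ x) :
    T c s m ↔ T c (move s m x hx) m := by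
  set A := move s m x hx with hA
  have hfresh : ∀ p, A p ≠ s m := by
    intro p
    by_cases hp : p = m
    · rw [hp]; show move s m x hx m ≠ s m
      rw [move_apply_self]; exact fun h => hx m h.symm
    · rw [move_apply_ne s m x hx hp]; exact fun h => hp (s.injective h)
  have hback : move A m (s m) hfresh = s := by
    apply DFunLike.ext
    intro p
    by_cases hp : p = m
    · subst hp; rw [move_apply_self]
    · rw [move_apply_ne A m (s m) hfresh hp, hA, move_apply_ne s m x hx hp]
  constructor
  · rintro ⟨x1, hx1, hAct1⟩
    have hAx : c A = c s + (s m - x) := L2 c hpair s m x1 x hx1 hx hAct1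
    refine ⟨s m, hfresh, ?_⟩
    rw [hback, hAx]
    have : A m = x := move_apply_self s m x hx
    rw [this]
    ring
  · rintro ⟨y, hy, hActy⟩
    have hAs : c (move A m (s m) hfresh) = c A + (A m - s m) :=
      L2 c hpair A m y (s m) hy hfresh hActy
    rw [hback, move_apply_self] at hAs
    exact ⟨x, hx, by linear_combination -hAs⟩

lemma L5 (hkn : k < n) (s : Fin k ↪ Fin n) (m m' : Fin k) (hne : m' ≠ m)
    (y : Fin n) (hy : ∀ p, s p ≠ y) (hT : T c s m) :
    T c (move s m' y hy) m := by
  have hinj := s.injective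
  have hym : s m ≠ y := hy m
  have hym' : s m' ≠ y := hy m'
  have hmm' : s m ≠ s m' := fun h => hne (hinj h).symm
  -- s' := move s m' y hy, passive
  have hcs' : c (move s m' y hy) = c s := by
    rcases L1 c hpair s m' y hy with h | h
    · exact h
    · exact absurd (L3 c hpair hkn s m' m ⟨y, hy, h⟩ hT) hne
  -- B := move s m y hy, active
  have hcB : c (move s m y hy) = c s + (s m - y) := by
    obtain ⟨x1, hx1, hAct1⟩ := hT
    exact L2 c hpair s m x1 y hx1 hy hAct1
  have hTB : T c (move s m y hy) m := (L4 c hpair s m y hy).mp hT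
  -- C := move B m' (s m), passive at m'
  have hfC : ∀ p, move s m y hy p ≠ s m := by
    intro p
    by_cases hp : p = m
    · rw [hp, move_apply_self]; exact fun h => hym h.symm
    · rw [move_apply_ne s m y hy hp]; exact fun h => hp (hinj h)
  have hcC : c (move (move s m y hy) m' (s m) hfC) = c s + (s m - y) := by
    rcases L1 c hpair (move s m y hy) m' (s m) hfC with h | h
    · rw [h, hcB]
    · exact absurd (L3 c hpair hkn (move s m y hy) m' m ⟨s m, hfC, h⟩ hTB) hne
  -- u := move s' m (s m')
  have hfu : ∀ p, move s m' y hy p ≠ s m' := by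
    intro p
    by_cases hp : p = m'
    · rw [hp, move_apply_self]; exact fun h => hym' h.symm
    · rw [move_apply_ne s m' y hy hp]; exact fun h => hp (hinj h)
  refine ⟨s m', hfu, ?_⟩
  rw [hcs', move_apply_ne s m' y hy (Ne.symm hne)]
  set u := move (move s m' y hy) m (s m') hfu with hu
  have hum : u m = s m' := move_apply_self _ m (s m') hfu
  have hum' : u m' = y := by
    rw [hu, move_apply_ne _ m (s m') hfu hne, move_apply_self]
  have hup : ∀ p, p ≠ m → p ≠ m' → u p = s p := by
    intro p h1 h2
    rw [hu, move_apply_ne _ m (s m') hfu h1, move_apply_ne s m' y hy h2]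
  by_contra hgoal
  -- I1 : pair (s, u)
  have I1 : c u = c s + (s m' - y) ∨ c u = c s := by
    obtain ⟨p, hp⟩ := hpair s u
    by_cases h1 : p = m
    · rw [h1, hum] at hp
      exact absurd (by linear_combination -hp) hgoal
    · by_cases h2 : p = m'
      · rw [h2, hum'] at hp; left; linear_combination -hp
      · rw [hup p h1 h2] at hp; right; linear_combination -hp
  -- I2 : pair (B, u)
  have I2 : c u = c s + (s m + s m' - 2 * y) ∨ c u = c s + (s m - y) := by
    obtain ⟨p, hp⟩ := hpair (move s m y hy) u
    by_cases h1 : p = m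
    · rw [h1, hum, move_apply_self, hcB] at hp
      exact absurd (by linear_combination -hp) hgoal
    · by_cases h2 : p = m'
      · rw [h2, hum', move_apply_ne s m y hy (Ne.symm (fun hh => hne hh.symm)), hcB] at hp
        left; linear_combination -hp
      · rw [hup p h1 h2, move_apply_ne s m y hy h1, hcB] at hp
        right; linear_combination -hp
  -- I3 : pair (C, u)
  have I3 : c u = c s + (2 * s m - 2 * y) ∨ c u = c s + (s m - y) := by
    obtain ⟨p, hp⟩ := hpair (move (move s m y hy) m' (s m) hfC) u
    have hCm : move (move s m y hy) m' (s m) hfC m = y := by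
      rw [move_apply_ne _ m' (s m) hfC (Ne.symm hne), move_apply_self]
    have hCm' : move (move s m y hy) m' (s m) hfC m' = s m := move_apply_self _ m' (s m) hfC
    by_cases h1 : p = m
    · rw [h1, hum, hCm, hcC] at hp
      exact absurd (by linear_combination -hp) hgoal
    · by_cases h2 : p = m'
      · rw [h2, hum', hCm', hcC] at hp
        left; linear_combination -hp
      · rw [hup p h1 h2, move_apply_ne _ m' (s m) hfC h2,
          move_apply_ne s m y hy h1, hcC] at hp
        right; linear_combination -hp
  rcases I1 with hα | hβ
  · rcases I2 with h | h
    · exact hym (by linear_combination hα - h)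
    · exact hmm' (by linear_combination hα - h)
  · rcases I3 with h3 | h3
    · rcases I2 with h2 | h2
      · exact hmm' (by linear_combination h2 - h3)
      · exact hym (by linear_combination hβ - h2)
    · exact hym (by linear_combination hβ - h3)

lemma T_step_fwd (hkn : k < n) {s t : Fin k ↪ Fin n} (hst : Step s t) {m : Fin k}
    (h : T c s m) : T c t m := by
  obtain ⟨m', x, hx, rfl⟩ := hst
  by_cases hmm : m' = m
  · subst hmm; exact (L4 c hpair s m' x hx).mp h
  · exact L5 c hpair hkn s m m' hmm x hx h

lemma T_step_iff (hkn : k < n) {s t : Fin k ↪ Fin n} (hst : Step s t) (m : Fin k) :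
    T c s m ↔ T c t m :=
  ⟨T_step_fwd c hpair hkn hst, T_step_fwd c hpair hkn (step_symm hst)⟩

theorem core (hk : 1 < k) (hkn : k < n) :
    ∃ (j : Fin k) (i : Fin n), ∀ s : Fin k ↪ Fin n, s j + c s = i := by
  classical
  set s₀ : Fin k ↪ Fin n := Fin.castLEEmb (le_of_lt hkn) with hs₀
  by_cases hT : ∃ j, T c s₀ j
  · obtain ⟨j, hj⟩ := hT
    have hTall : ∀ s, T c s j := by
      intro s
      have hr := reach' hkn s₀ s
      induction hr with
      | refl => exact hj
      | tail hab hbc ih => exact T_step_fwd c hpair hkn hbc ih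
    have hstep : ∀ s t, Step s t → t j + c t = s j + c s := by
      intro s t hst
      obtain ⟨m, x, hx, rfl⟩ := hst
      by_cases hmm : m = j
      · subst hmm
        obtain ⟨x1, hx1, hAct⟩ := hTall s
        rw [L2 c hpair s m x1 x hx1 hx hAct, move_apply_self]
        ring
      · have hpass : c (move s m x hx) = c s := by
          rcases L1 c hpair s m x hx with h | h
          · exact h
          · exact absurd (L3 c hpair hkn s m j ⟨x, hx, h⟩ (hTall s)) hmm
        rw [hpass, move_apply_ne s m x hx (fun h => hmm h.symm)]
    refine ⟨j, s₀ j + c s₀, fun s => ?_⟩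
    have hr := reach' hkn s₀ s
    induction hr with
    | refl => rfl
    | tail hab hbc ih => rw [hstep _ _ hbc, ih]
  · push_neg at hT
    have hTnone : ∀ s m, ¬ T c s m := by
      intro s
      have hr := reach' hkn s₀ s
      induction hr with
      | refl => exact hT
      | tail hab hbc ih => exact fun m hm => ih m ((T_step_iff c hpair hkn hbc m).mpr hm)
    have hcstep : ∀ s t, Step s t → c t = c s := by
      intro s t hst
      obtain ⟨m, x, hx, rfl⟩ := hst
      rcases L1 c hpair s m x hx with h | h
      · exact h
      · exact absurd ⟨x, hx, h⟩ (hTnone s m)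
    have hconst : ∀ s, c s = c s₀ := by
      intro s
      have hr := reach' hkn s₀ s
      induction hr with
      | refl => rfl
      | tail hab hbc ih => rw [hcstep _ _ hbc, ih]
    exfalso
    obtain ⟨p, hp⟩ := hpair s₀ (shifted s₀ 1)
    rw [shifted_apply, hconst (shifted s₀ 1)] at hp
    have h01 : (0 : Fin n) = 1 := by linear_combination hp
    have hval := congrArg Fin.val h01
    rw [Fin.val_zero, Fin.val_one'] at hval
    have : 1 % n = 1 := Nat.mod_eq_of_lt (by omega)
    omega

end Core

section StarClass

variable {n k : ℕ} [NeZero n]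

lemma shifted_zero (u : Fin k ↪ Fin n) : shifted u 0 = u := by
  apply DFunLike.ext; intro p; simp

lemma star_of_intersecting (hk : 1 < k) (hkn : k < n) (F : Set (Fin k ↪ Fin n))
    (hint : ∀ u ∈ F, ∀ v ∈ F, ∃ p, u p = v p)
    (horb : ∀ t, ∃ cc, shifted t cc ∈ F) :
    ∃ (i : Fin n) (j : Fin k), F = {s | s j = i} := by
  classical
  choose c hc using horb
  have hpair : ∀ s t : Fin k ↪ Fin n, ∃ p, s p + c s = t p + c t := by
    intro s t
    obtain ⟨p, hp⟩ := hint _ (hc s) _ (hc t)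
    exact ⟨p, by simpa using hp⟩
  obtain ⟨j, i, hji⟩ := core c hpair hk hkn
  refine ⟨i, j, ?_⟩
  ext u
  constructor
  · intro hu
    have h0 : c u = 0 := by
      obtain ⟨p, hp⟩ := hint _ ((shifted_zero u).symm ▸ hu) _ (hc u)
      simpa using hp
    have hj := hji u
    rw [h0, add_zero] at hj
    exact hj
  · intro hu
    have hj := hji u
    have hcu : c u = 0 := by
      simp only [Set.mem_setOf_eq] at hu
      linear_combination hj - hu
    have hmem := hc u
    rw [hcu, shifted_zero] at hmem
    exact hmem

lemma image_star (hk : 1 < k) (hkn : k < n) (g : A n k k ≃g A n k k) (i : Fin n) (j : Fin k) :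
    ∃ (i' : Fin n) (j' : Fin k), ⇑g '' Delta n k i j = Delta n k i' j' := by
  have hint : ∀ u ∈ ⇑g '' Delta n k i j, ∀ v ∈ ⇑g '' Delta n k i j, ∃ p, u p = v p := by
    rintro u ⟨a, ha, rfl⟩ v ⟨b, hb, rfl⟩
    rw [delta_eq] at ha hb
    rw [Set.mem_setOf_eq] at ha hb
    by_cases hab : a = b
    · exact ⟨j, by rw [hab]⟩
    · have hnadj : ¬ (A n k k).Adj (g a) (g b) := by
        rw [g.map_adj_iff, adj_iff (by omega : 0 < k)]
        push_neg
        exact ⟨j, by rw [ha, hb]⟩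
      rw [adj_iff (by omega : 0 < k)] at hnadj
      push_neg at hnadj
      exact hnadj
  have horb : ∀ t, ∃ cc, shifted t cc ∈ ⇑g '' Delta n k i j := by
    intro t
    have hψinj : Function.Injective (fun cc => g.symm (shifted t cc) j) := by
      intro cc cc' hcc
      by_contra hne
      have hadj : (A n k k).Adj (shifted t cc) (shifted t cc') := by
        rw [adj_iff (by omega : 0 < k)]
        intro p
        simp only [shifted_apply]
        exact fun h => hne (by simpa using h)
      have hadj2 : (A n k k).Adj (g.symm (shifted t cc)) (g.symm (shifted t cc')) := by
        rwa [← g.symm.map_adj_iff] at hadj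
      rw [adj_iff (by omega : 0 < k)] at hadj2
      exact hadj2 j hcc
    obtain ⟨cc, hcc⟩ := Finite.surjective_of_injective hψinj i
    refine ⟨cc, g.symm (shifted t cc), ?_, by simp⟩
    rw [delta_eq]
    exact hcc
  obtain ⟨i', j', h⟩ := star_of_intersecting hk hkn (⇑g '' Delta n k i j) hint horb
  exact ⟨i', j', by rw [h, ← delta_eq]⟩

end StarClass

section DeltaFacts

variable {n k : ℕ}

lemma exists_one (hkn : k ≤ n) (i : Fin n) (j : Fin k) : ∃ s : Fin k ↪ Fin n, s j = i :=
  ⟨(Fin.castLEEmb hkn).trans (Equiv.swap (Fin.castLEEmb hkn j) i).toEmbedding, by simp⟩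

lemma delta_inj (hk : 1 < k) (hkn : k < n) {i i' : Fin n} {j j' : Fin k}
    (h : Delta n k i j = Delta n k i' j') : i = i' ∧ j = j' := by
  rw [delta_eq, delta_eq] at h
  have hjj : j = j' := by
    by_contra hne
    have hv : ∃ v : Fin n, v ≠ i ∧ v ≠ i' := by
      by_contra hc
      push_neg at hc
      have hsub : (Finset.univ : Finset (Fin n)) ⊆ {i, i'} := by
        intro v _
        rcases eq_or_ne v i with rfl | hvi
        · simp
        · simp [hc v hvi]
      have := Finset.card_le_card hsub
      have h2 : ({i, i'} : Finset (Fin n)).card ≤ 2 := Finset.card_insert_le _ _ |>.trans (by simp)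
      simp at this
      omega
    obtain ⟨v, hvi, hvi'⟩ := hv
    obtain ⟨s, hs1, hs2⟩ := exists_two (le_of_lt hkn) hne (Ne.symm hvi)
    have hmem : s ∈ {s : Fin k ↪ Fin n | s j = i} := hs1
    rw [h] at hmem
    exact hvi' ((hs2.symm.trans hmem))
  subst hjj
  refine ⟨?_, rfl⟩
  obtain ⟨s, hs⟩ := exists_one (le_of_lt hkn) i j
  have hmem : s ∈ {s : Fin k ↪ Fin n | s j = i} := hs
  rw [h] at hmem
  exact hs.symm.trans hmem

lemma delta_disj {i i' : Fin n} (j : Fin k) (h : i ≠ i') :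
    Delta n k i j ∩ Delta n k i' j = ∅ := by
  rw [delta_eq, delta_eq]
  ext s
  simp only [Set.mem_inter_iff, Set.mem_setOf_eq, Set.mem_empty_iff_false, iff_false]
  rintro ⟨h1, h2⟩
  exact h (h1.symm.trans h2)

lemma delta_nondisj (hkn : k ≤ n) {i i' : Fin n} {j j' : Fin k} (hj : j ≠ j') (hi : i ≠ i') :
    (Delta n k i j ∩ Delta n k i' j').Nonempty := by
  obtain ⟨s, hs1, hs2⟩ := exists_two hkn hj hi
  exact ⟨s, by rw [delta_eq, delta_eq]; exact ⟨hs1, hs2⟩⟩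

end DeltaFacts

/-- For `1 < k < n`, the sets `Ω^j = {Δ_{1j},…,Δ_{nj}}` form a system of blocks for
the action of `Aut(A(n,k,k))` on `Ω = {Δ_{ij}}`. -/
theorem stmt9 (n k : ℕ) (hk : 1 < k) (hkn : k < n)
    (g : A n k k ≃g A n k k) (j : Fin k) :
    (Set.image ⇑g) '' {S | ∃ i : Fin n, S = Delta n k i j} =
        {S | ∃ i : Fin n, S = Delta n k i j} ∨
    (Set.image ⇑g) '' {S | ∃ i : Fin n, S = Delta n k i j} ∩
        {S | ∃ i : Fin n, S = Delta n k i j} = ∅ := by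
  classical
  haveI : NeZero n := ⟨by omega⟩
  by_cases hemp : (Set.image ⇑g) '' {S | ∃ i : Fin n, S = Delta n k i j} ∩
      {S | ∃ i : Fin n, S = Delta n k i j} = ∅
  · exact Or.inr hemp
  · left
    obtain ⟨S, hS1, hS2⟩ := Set.nonempty_iff_ne_empty.mpr hemp
    obtain ⟨S', ⟨i₀, rfl⟩, hgS⟩ := hS1
    obtain ⟨i₁, hSd⟩ := hS2
    have hginj : Function.Injective ⇑g := g.toEquiv.injective
    choose I J hIJ using fun a : Fin n => image_star hk hkn g a j
    have himginj : ∀ a b, Delta n k (I a) (J a) = Delta n k (I b) (J b) → a = b := by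
      intro a b hab
      rw [← hIJ, ← hIJ] at hab
      have h2 := Set.image_injective.mpr hginj hab
      exact (delta_inj hk hkn h2).1
    have hdisj : ∀ a b : Fin n, a ≠ b →
        Delta n k (I a) (J a) ∩ Delta n k (I b) (J b) = ∅ := by
      intro a b hab
      rw [← hIJ, ← hIJ, ← Set.image_inter hginj, delta_disj j hab, Set.image_empty]
    have key : ∀ x y, J x ≠ J y → I x = I y := by
      intro x y hxy
      by_contra hI
      obtain ⟨s, hs⟩ := delta_nondisj (le_of_lt hkn) hxy hI
      have hd := hdisj x y (fun h => hxy (congrArg J h))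
      rw [hd] at hs
      exact hs
    have hJconst : ∀ a b, J a = J b := by
      by_contra hc
      push_neg at hc
      obtain ⟨a, b, hab⟩ := hc
      have hIall : ∀ x, I x = I a := by
        intro x
        rcases eq_or_ne (J x) (J a) with hxa | hxa
        · exact (key x b (hxa ▸ hab)).trans (key b a (Ne.symm hab))
        · exact key x a hxa
      have hJinj : Function.Injective J := by
        intro x y hxy
        apply himginj
        rw [hxy, hIall x, hIall y]
      have hcard := Fintype.card_le_of_injective J hJinj
      simp at hcard
      omega
    have hJi₀ : J i₀ = j := by
      have h1 : Delta n k (I i₀) (J i₀) = Delta n k i₁ j := by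
        rw [← hIJ]
        show Set.image ⇑g (Delta n k i₀ j) = Delta n k i₁ j
        rw [hgS, hSd]
      exact (delta_inj hk hkn h1).2
    ext X
    simp only [Set.mem_image, Set.mem_setOf_eq]
    constructor
    · rintro ⟨S', ⟨a, rfl⟩, rfl⟩
      refine ⟨I a, ?_⟩
      show ⇑g '' Delta n k a j = Delta n k (I a) j
      rw [hIJ, hJconst a i₀, hJi₀]
    · rintro ⟨b, rfl⟩
      have hIinj : Function.Injective I := by
        intro x y hxy
        apply himginj
        rw [hxy, hJconst x y]
      obtain ⟨a, ha⟩ := Finite.surjective_of_injective hIinj b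
      refine ⟨Delta n k a j, ⟨a, rfl⟩, ?_⟩
      show ⇑g '' Delta n k a j = Delta n k b j
      rw [hIJ, hJconst a i₀, hJi₀, ha]
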